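/- Let Ω be a finite probability space, M ≥ 2, and X_1, …, X_M random variables with X_i taking values in a finite type A_i, such that the joint probability P(X_1 = x_1, …, X_M = x_M) is strictly positive for every tuple. For a parent assignment Θ : {2, …, M} → {1, …, M}, let q_Θ(x) = P(X_1 = x_1) · ∏_{i=2}^{M} P(X_i = x_i ∣ X_{Θ(i)} = x_{Θ(i)}) and D(Θ) = Σ_x P(X = x) log( P(X = x)/q_Θ(x) ). Then for any two parent assignments Θ and Θ′: D(Θ) ≤ D(Θ′) if and only if Σ_{i=2}^{M} I(X_i ; X_{Θ(i)}) ≥ Σ_{i=2}^{M} I(X_i ; X_{Θ′(i)}). In particular, minimizing the KL divergence over parent assignments is equivalent to maximizing the sum of pairwise mutual informations. -/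

import Mathlib

open scoped Classical

/-- Probability of an event `p` under the pmf `w` on a finite sample space. -/
noncomputable def pr {Ω : Type*} [Fintype Ω] (w : Ω → ℝ) (p : Ω → Prop) : ℝ :=
  ∑ ω : Ω, if p ω then w ω else 0

/-- Mutual information `I(X;Y)` (terms with zero joint probability vanish since `0 * log _ = 0`). -/
noncomputable def mutualInfo {Ω A B : Type*} [Fintype Ω] [Fintype A] [Fintype B]
    (w : Ω → ℝ) (X : Ω → A) (Y : Ω → B) : ℝ :=
  ∑ a : A, ∑ b : B,
    pr w (fun ω => X ω = a ∧ Y ω = b) *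
      Real.log (pr w (fun ω => X ω = a ∧ Y ω = b) /
        (pr w (fun ω => X ω = a) * pr w (fun ω => Y ω = b)))

/-- The tree-structured approximation
`q_Θ(x) = P(X_0 = x_0) ∏_{i ≠ 0} P(X_i = x_i ∣ X_{Θ i} = x_{Θ i})`
(index `0` of `Fin M` plays the role of `X_1`). -/
noncomputable def treeApprox {Ω : Type*} [Fintype Ω] (w : Ω → ℝ)
    {M : ℕ} (hM : 2 ≤ M) (A : Fin M → Type*) [∀ i, Fintype (A i)]
    (X : ∀ i, Ω → A i) (Θ : Fin M → Fin M) (x : ∀ i, A i) : ℝ :=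
  pr w (fun ω => X ⟨0, by omega⟩ ω = x ⟨0, by omega⟩) *
    ∏ i ∈ Finset.univ.filter (fun i : Fin M => i ≠ ⟨0, by omega⟩),
      pr w (fun ω => X i ω = x i ∧ X (Θ i) ω = x (Θ i)) /
        pr w (fun ω => X (Θ i) ω = x (Θ i))

/-- The KL divergence `D(Θ) = ∑_x P(X = x) log (P(X = x) / q_Θ(x))`. -/
noncomputable def treeKL {Ω : Type*} [Fintype Ω] (w : Ω → ℝ)
    {M : ℕ} (hM : 2 ≤ M) (A : Fin M → Type*) [∀ i, Fintype (A i)]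
    (X : ∀ i, Ω → A i) (Θ : Fin M → Fin M) : ℝ :=
  ∑ x : ∀ i, A i,
    pr w (fun ω => ∀ i, X i ω = x i) *
      Real.log (pr w (fun ω => ∀ i, X i ω = x i) / treeApprox w hM A X Θ x)

/-! The tree approximation factors as `q_Θ(x) = (∏ᵢ P(Xᵢ = xᵢ)) · ∏_{i ≠ 0} exp pmi(xᵢ, x_{Θ i})`,
where `pmi` is the pointwise mutual information of `Xᵢ` and `X_{Θ i}`. Taking the expectation
of `log (P(X = x) / q_Θ(x))` therefore gives `D(Θ) = C - ∑_{i ≠ 0} I(Xᵢ; X_{Θ i})`, where the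
total correlation `C = ∑ₓ P(X = x) log (P(X = x) / ∏ᵢ P(Xᵢ = xᵢ))` does not depend on `Θ`. -/

section FiniteProbability

variable {Ω : Type*} [Fintype Ω] (w : Ω → ℝ)

noncomputable def pointwiseMutualInfo {A B : Type*} (X : Ω → A) (Y : Ω → B) (a : A) (b : B) :
    ℝ :=
  Real.log (pr w (fun ω => X ω = a ∧ Y ω = b) / (pr w (fun ω => X ω = a) * pr w (fun ω => Y ω = b)))

noncomputable def totalCorrelation {ι : Type*} [Fintype ι] [DecidableEq ι] (A : ι → Type*)
    [∀ i, Fintype (A i)] (X : ∀ i, Ω → A i) : ℝ :=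
  ∑ x : ∀ i, A i,
    pr w (fun ω => ∀ i, X i ω = x i) *
      Real.log (pr w (fun ω => ∀ i, X i ω = x i) / ∏ i, pr w (fun ω => X i ω = x i))

lemma pr_mono (hw0 : ∀ ω, 0 ≤ w ω) {p q : Ω → Prop} (h : ∀ ω, p ω → q ω) :
    pr w p ≤ pr w q :=
  Finset.sum_le_sum fun ω _ => by
    split_ifs with hp hq hq
    exacts [le_rfl, absurd (h ω hp) hq, hw0 ω, le_rfl]

lemma sum_pr_mul_eq_sum_comp {B : Type*} [Fintype B] (Y : Ω → B) (g : B → ℝ) :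
    ∑ b, pr w (fun ω => Y ω = b) * g b = ∑ ω, w ω * g (Y ω) := by
  simp only [pr, Finset.sum_mul, ite_mul, zero_mul]
  rw [Finset.sum_comm]
  simp

lemma sum_pr_pi_mul_eq_sum_comp {ι : Type*} [Fintype ι] [DecidableEq ι] (A : ι → Type*)
    [∀ i, Fintype (A i)]
    (X : ∀ i, Ω → A i) (f : (∀ i, A i) → ℝ) :
    ∑ x : ∀ i, A i, pr w (fun ω => ∀ i, X i ω = x i) * f x = ∑ ω, w ω * f (fun i => X i ω) := by
  rw [← sum_pr_mul_eq_sum_comp w (fun ω i => X i ω) f]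
  simp only [funext_iff]

lemma sum_pr_and_mul_eq_sum_comp {B C : Type*} [Fintype B] [Fintype C] (Y : Ω → B)
    (Z : Ω → C) (g : B → C → ℝ) :
    ∑ b, ∑ c, pr w (fun ω => Y ω = b ∧ Z ω = c) * g b c = ∑ ω, w ω * g (Y ω) (Z ω) := by
  rw [← sum_pr_mul_eq_sum_comp w (fun ω => (Y ω, Z ω)) (fun p => g p.1 p.2),
    Fintype.sum_prod_type]
  simp only [Prod.mk.injEq]

lemma mutualInfo_eq_sum_pointwiseMutualInfo {B C : Type*} [Fintype B] [Fintype C]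
    (Y : Ω → B) (Z : Ω → C) :
    mutualInfo w Y Z = ∑ ω, w ω * pointwiseMutualInfo w Y Z (Y ω) (Z ω) :=
  sum_pr_and_mul_eq_sum_comp w Y Z (pointwiseMutualInfo w Y Z)

lemma sum_pr_pi_mul_pointwiseMutualInfo {ι : Type*} [Fintype ι] [DecidableEq ι] {A : ι → Type*}
    [∀ i, Fintype (A i)] {X : ∀ i, Ω → A i} (i j : ι) :
    ∑ x : ∀ k, A k, pr w (fun ω => ∀ k, X k ω = x k) * pointwiseMutualInfo w (X i) (X j) (x i) (x j)
      = mutualInfo w (X i) (X j) := by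
  rw [sum_pr_pi_mul_eq_sum_comp, mutualInfo_eq_sum_pointwiseMutualInfo]

variable {ι : Type*} {A : ι → Type*} {X : ∀ i, Ω → A i}

lemma pr_marginal_pos (hw0 : ∀ ω, 0 ≤ w ω)
    (hpos : ∀ x : ∀ i, A i, 0 < pr w (fun ω => ∀ i, X i ω = x i)) (x : ∀ i, A i) (i : ι) :
    0 < pr w (fun ω => X i ω = x i) :=
  (hpos x).trans_le (pr_mono w hw0 fun _ h => h i)

lemma pr_pair_pos (hw0 : ∀ ω, 0 ≤ w ω)
    (hpos : ∀ x : ∀ i, A i, 0 < pr w (fun ω => ∀ i, X i ω = x i)) (x : ∀ i, A i) (i j : ι) :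
    0 < pr w (fun ω => X i ω = x i ∧ X j ω = x j) :=
  (hpos x).trans_le (pr_mono w hw0 fun _ h => ⟨h i, h j⟩)

end FiniteProbability

lemma mul_prod_div_eq_prod_mul_prod {ι K : Type*} [Fintype ι] [DecidableEq ι] [Field K] (i₀ : ι)
    (d c b : ι → K) (hd : ∀ i, d i ≠ 0) :
    d i₀ * ∏ i ∈ Finset.univ.filter (· ≠ i₀), c i / b i
      = (∏ i, d i) * ∏ i ∈ Finset.univ.filter (· ≠ i₀), c i / (d i * b i) := by
  rw [Finset.filter_ne', ← Finset.mul_prod_erase _ d (Finset.mem_univ i₀), mul_assoc,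
    ← Finset.prod_mul_distrib]
  congr 1
  refine Finset.prod_congr rfl fun i _ => ?_
  rw [mul_div_assoc', mul_div_mul_left _ _ (hd i)]

section TreeApprox

variable {Ω : Type*} [Fintype Ω] {w : Ω → ℝ} {M : ℕ} (hM : 2 ≤ M) {A : Fin M → Type*}
  [∀ i, Fintype (A i)] {X : ∀ i, Ω → A i}

lemma treeApprox_eq_prod_mul_prod_exp (hw0 : ∀ ω, 0 ≤ w ω)
    (hpos : ∀ x : ∀ i, A i, 0 < pr w (fun ω => ∀ i, X i ω = x i)) (Θ : Fin M → Fin M)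
    (x : ∀ i, A i) :
    treeApprox w hM A X Θ x = (∏ i, pr w (fun ω => X i ω = x i)) *
      ∏ i ∈ Finset.univ.filter (fun i : Fin M => i ≠ ⟨0, by omega⟩),
        Real.exp (pointwiseMutualInfo w (X i) (X (Θ i)) (x i) (x (Θ i))) := by
  rw [treeApprox,
    mul_prod_div_eq_prod_mul_prod _ _ _ _ fun i => (pr_marginal_pos w hw0 hpos x i).ne']
  congr 1
  refine Finset.prod_congr rfl fun i _ => (Real.exp_log ?_).symm
  exact div_pos (pr_pair_pos w hw0 hpos x _ _)
    (mul_pos (pr_marginal_pos w hw0 hpos x _) (pr_marginal_pos w hw0 hpos x _))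

lemma log_div_treeApprox (hw0 : ∀ ω, 0 ≤ w ω)
    (hpos : ∀ x : ∀ i, A i, 0 < pr w (fun ω => ∀ i, X i ω = x i)) (Θ : Fin M → Fin M)
    (x : ∀ i, A i) :
    Real.log (pr w (fun ω => ∀ i, X i ω = x i) / treeApprox w hM A X Θ x)
      = Real.log (pr w (fun ω => ∀ i, X i ω = x i) / ∏ i, pr w (fun ω => X i ω = x i))
        - ∑ i ∈ Finset.univ.filter (fun i : Fin M => i ≠ ⟨0, by omega⟩),
            pointwiseMutualInfo w (X i) (X (Θ i)) (x i) (x (Θ i)) := by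
  have hmarginals : 0 < ∏ i, pr w (fun ω => X i ω = x i) :=
    Finset.prod_pos fun i _ => pr_marginal_pos w hw0 hpos x i
  rw [treeApprox_eq_prod_mul_prod_exp hM hw0 hpos, ← div_div,
    Real.log_div (div_pos (hpos x) hmarginals).ne' (Finset.prod_pos fun _ _ => Real.exp_pos _).ne',
    Real.log_prod fun _ _ => (Real.exp_pos _).ne']
  simp only [Real.log_exp]

theorem treeKL_eq_totalCorrelation_sub (hw0 : ∀ ω, 0 ≤ w ω)
    (hpos : ∀ x : ∀ i, A i, 0 < pr w (fun ω => ∀ i, X i ω = x i)) (Θ : Fin M → Fin M) :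
    treeKL w hM A X Θ = totalCorrelation w A X
      - ∑ i ∈ Finset.univ.filter (fun i : Fin M => i ≠ ⟨0, by omega⟩),
          mutualInfo w (X i) (X (Θ i)) := by
  simp only [treeKL, log_div_treeApprox hM hw0 hpos, mul_sub, Finset.sum_sub_distrib,
    Finset.mul_sum]
  rw [Finset.sum_comm]
  simp only [sum_pr_pi_mul_pointwiseMutualInfo, totalCorrelation]

end TreeApprox

/-- For a strictly positive joint distribution, comparing two parent assignments
`Θ` and `Θ'`: the KL divergence of `Θ` is at most that of `Θ'` iff the total pairwise mutual
information of `Θ` is at least that of `Θ'`. Hence minimizing the KL divergence over parent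
assignments is equivalent to maximizing the sum of pairwise mutual informations. -/
theorem kl_le_iff_mutualInfo_ge
    {Ω : Type*} [Fintype Ω] (w : Ω → ℝ)
    (hw0 : ∀ ω, 0 ≤ w ω)
    (M : ℕ) (hM : 2 ≤ M)
    (A : Fin M → Type*) [∀ i, Fintype (A i)]
    (X : ∀ i, Ω → A i)
    (hpos : ∀ x : ∀ i, A i, 0 < pr w (fun ω => ∀ i, X i ω = x i))
    (Θ Θ' : Fin M → Fin M) :
    treeKL w hM A X Θ ≤ treeKL w hM A X Θ' ↔
      ∑ i ∈ Finset.univ.filter (fun i : Fin M => i ≠ ⟨0, by omega⟩),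
          mutualInfo w (X i) (X (Θ' i))
        ≤ ∑ i ∈ Finset.univ.filter (fun i : Fin M => i ≠ ⟨0, by omega⟩),
            mutualInfo w (X i) (X (Θ i)) := by
  rw [treeKL_eq_totalCorrelation_sub hM hw0 hpos, treeKL_eq_totalCorrelation_sub hM hw0 hpos]
  exact sub_le_sub_iff_left _
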